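/- arXiv:2510.18414 — 3 statements merged into one kernel-verified Lean document; each statement's English description precedes it below -/
import Mathlib

section
/- For every n ≥ 1, the set Ω_n = { x ∈ {0,…,9}^n : ∃ k ≥ n, ∑_{j=1}^n 10^{j-1} x_j ≡ 2^k (mod 10^n) } has cardinality 4·5^(n-1). -/
open scoped Classical

lemma lemA : ∀ m : ℕ, 1 ≤ m → ∃ u : ℕ, 2 ^ (4 * 5 ^ (m-1)) = 1 + 5 ^ m * u ∧ ¬ (5 ∣ u) := by
  intro m hm
  induction m, hm using Nat.le_induction with
  | base => exact ⟨3, by norm_num, by norm_num⟩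
  | succ m hm ih =>
    obtain ⟨u, hu, hu5⟩ := ih
    set Q := 5 ^ (m - 1) with hQ
    have h5m : 5 ^ m = 5 * Q := by
      rw [hQ, ← pow_succ']
      congr 1; omega
    refine ⟨u + 5 * (2*Q*u^2 + 10*Q^2*u^3 + 25*Q^3*u^4 + 25*Q^4*u^5), ?_, ?_⟩
    · have he : 4 * 5 ^ (m + 1 - 1) = (4 * 5 ^ (m-1)) * 5 := by
        rw [Nat.add_sub_cancel]
        have : 5 ^ m = 5 ^ (m-1) * 5 := by rw [← pow_succ]; congr 1; omega
        rw [this]; ring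
      rw [he, pow_mul, hu, h5m]
      have h5m1 : 5 ^ (m + 1) = 25 * Q := by
        rw [pow_succ, h5m]; ring
      rw [h5m1]; ring
    · intro hd
      have : (5:ℕ) ∣ u := (Nat.dvd_add_right (Dvd.intro _ rfl)).mp (by rwa [add_comm] at hd)
      exact hu5 this

lemma ord2five : orderOf (2 : ZMod 5) = 4 := by
  rw [orderOf_eq_iff (by norm_num)]
  exact ⟨by decide, by decide⟩

lemma ord2 (n : ℕ) (hn : 1 ≤ n) : orderOf (2 : ZMod (5^n)) = 4 * 5^(n-1) := by
  haveI : NeZero (5^n) := ⟨pow_ne_zero n (by norm_num)⟩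
  obtain ⟨u, hu, hu5⟩ := lemA n hn
  have h0 : (5:ZMod (5^n))^n = 0 := by
    have := ZMod.natCast_self (5^n); push_cast at this; exact this
  have h1 : (2 : ZMod (5^n)) ^ (4 * 5 ^ (n-1)) = 1 := by
    have := congrArg (fun a : ℕ => (a : ZMod (5^n))) hu
    push_cast at this
    rw [this, h0, zero_mul, add_zero]
  have hdvd : orderOf (2 : ZMod (5^n)) ∣ 4 * 5 ^ (n-1) := orderOf_dvd_of_pow_eq_one h1
  have h2 : 4 ∣ orderOf (2 : ZMod (5^n)) := by
    have hpow : (2 : ZMod (5^n)) ^ orderOf (2 : ZMod (5^n)) = 1 := pow_orderOf_eq_one _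
    have h5 : (5:ℕ) ∣ 5^n := dvd_pow_self 5 (by omega)
    have hc := congrArg (ZMod.castHom h5 (ZMod 5)) hpow
    rw [map_pow, map_one, map_ofNat] at hc
    rw [← ord2five]
    exact orderOf_dvd_of_pow_eq_one hc
  rcases Nat.lt_or_ge n 2 with hn2 | hn2
  · have hn1 : n = 1 := by omega
    subst hn1
    norm_num at hdvd ⊢
    exact Nat.dvd_antisymm hdvd h2
  · -- n ≥ 2
    have h3 : (2 : ZMod (5^n)) ^ (4 * 5 ^ (n-2)) ≠ 1 := by
      obtain ⟨v, hv, hv5⟩ := lemA (n-1) (by omega)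
      intro hone
      have hcast : ((2 ^ (4 * 5 ^ (n-2)) : ℕ) : ZMod (5^n)) = ((1:ℕ) : ZMod (5^n)) := by
        push_cast
        rw [hone]
      have hmod : 2 ^ (4 * 5 ^ (n-2)) ≡ 1 [MOD 5^n] := (ZMod.natCast_eq_natCast_iff _ _ _).mp hcast
      have : n - 1 - 1 = n - 2 := by omega
      rw [this] at hv
      rw [hv] at hmod
      have hdv : 5^n ∣ 5^(n-1) * v := by
        have := (Nat.modEq_iff_dvd' (by omega)).mp hmod.symm
        simpa using this
      have h5n : 5^n = 5^(n-1) * 5 := by rw [← pow_succ]; congr 1; omega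
      rw [h5n] at hdv
      have : 5 ∣ v := (mul_dvd_mul_iff_left (a := 5^(n-1)) (by positivity)).mp hdv
      exact hv5 this
    obtain ⟨e, he⟩ := h2
    have he' : e ∣ 5 ^ (n-1) := by
      have : 4 * e ∣ 4 * 5^(n-1) := he ▸ hdvd
      exact (mul_dvd_mul_iff_left (by norm_num : (4:ℕ) ≠ 0)).mp this
    obtain ⟨j, hj, hej⟩ := (Nat.dvd_prime_pow (by norm_num : Nat.Prime 5)).mp he'
    rcases Nat.lt_or_ge j (n-1) with hjlt | hjge
    · exfalso
      apply h3
      rw [← orderOf_dvd_iff_pow_eq_one, he, hej]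
      exact mul_dvd_mul_left 4 (pow_dvd_pow 5 (by omega))
    · have : j = n - 1 := le_antisymm hj hjge
      rw [he, hej, this]

noncomputable def Dn (n : ℕ) (x : Fin n → Fin 10) : ℕ :=
  ∑ j : Fin n, 10 ^ (j : ℕ) * (x j : ℕ)

noncomputable def Omega (n : ℕ) : Finset (Fin n → Fin 10) :=
  Finset.univ.filter (fun x => ∃ k ≥ n, Dn n x % 10 ^ n = 2 ^ k % 10 ^ n)

lemma Dn_eq (n : ℕ) (x : Fin n → Fin 10) : Dn n x = (finFunctionFinEquiv x : ℕ) := by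
  rw [Dn, finFunctionFinEquiv_apply]
  exact Finset.sum_congr rfl (fun j _ => mul_comm _ _)

lemma Dn_lt (n : ℕ) (x : Fin n → Fin 10) : Dn n x < 10 ^ n := by
  rw [Dn_eq]; exact (finFunctionFinEquiv x).isLt

-- periodicity
section
variable (n : ℕ) (hn : 1 ≤ n)

lemma hT1 (n : ℕ) (hn : 1 ≤ n) : 2 ^ (4 * 5 ^ (n-1)) ≡ 1 [MOD 5^n] := by
  obtain ⟨u, hu, -⟩ := lemA n hn
  rw [hu]
  have hd : 5^n ∣ (1 + 5^n*u) - 1 := by simp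
  exact ((Nat.modEq_iff_dvd' (by simp)).mpr hd).symm

lemma hper (n : ℕ) (hn : 1 ≤ n) (a : ℕ) (ha : n ≤ a) :
    2 ^ (a + 4 * 5 ^ (n-1)) ≡ 2 ^ a [MOD 10^n] := by
  have h10 : (10:ℕ)^n = 2^n * 5^n := by rw [← mul_pow]; norm_num
  rw [h10]
  refine (Nat.modEq_and_modEq_iff_modEq_mul (Nat.Coprime.pow n n (by norm_num))).mp ⟨?_, ?_⟩
  · -- mod 2^n : both divisible
    have h1 : 2^(a + 4*5^(n-1)) ≡ 0 [MOD 2^n] :=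
      (Nat.modEq_zero_iff_dvd).mpr (pow_dvd_pow 2 (by omega))
    have h2 : 2^a ≡ 0 [MOD 2^n] :=
      (Nat.modEq_zero_iff_dvd).mpr (pow_dvd_pow 2 ha)
    exact h1.trans h2.symm
  · calc 2^(a + 4*5^(n-1)) = 2^a * 2^(4*5^(n-1)) := by rw [pow_add]
    _ ≡ 2^a * 1 [MOD 5^n] := Nat.ModEq.mul_left _ (hT1 n hn)
    _ = 2^a := by rw [mul_one]

lemma hred (n : ℕ) (hn : 1 ≤ n) : ∀ m : ℕ,
    2 ^ (n + m) ≡ 2 ^ (n + m % (4 * 5 ^ (n-1))) [MOD 10^n] := by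
  intro m
  induction m using Nat.strong_induction_on with
  | _ m ih =>
    set T := 4 * 5 ^ (n-1) with hT
    have hTpos : 0 < T := by positivity
    rcases Nat.lt_or_ge m T with h | h
    · rw [Nat.mod_eq_of_lt h]
    · have h1 : 2 ^ (n + m) ≡ 2 ^ (n + (m - T)) [MOD 10^n] := by
        have := hper n hn (n + (m - T)) (by omega)
        have he : n + (m - T) + T = n + m := by omega
        rw [he] at this
        exact this
      have h2 := ih (m - T) (by omega)
      have h3 : (m - T) % T = m % T := by
        conv_rhs => rw [show m = m - T + T by omega]
        rw [Nat.add_mod_right]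
      rw [h3] at h2
      exact h1.trans h2

end
theorem card_Omega (n : ℕ) (hn : 1 ≤ n) : (Omega n).card = 4 * 5 ^ (n - 1) := by
  set T := 4 * 5 ^ (n-1) with hT
  set N := (10:ℕ)^n with hN
  have hTpos : 0 < T := by positivity
  have hNpos : 0 < N := by positivity
  haveI : NeZero ((5:ℕ)^n) := ⟨pow_ne_zero n (by norm_num)⟩
  -- injectivity of k ↦ 2^k % N on Ico n (n+T)
  have hinj : ∀ k ∈ Finset.Ico n (n+T), ∀ l ∈ Finset.Ico n (n+T),
      2^k % N = 2^l % N → k = l := by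
    have key : ∀ k l, n ≤ k → k ≤ l → l < n + T → 2^k % N = 2^l % N → k = l := by
      intro k l hk hkl hl hmod
      have h5 : 2^k ≡ 2^l [MOD 5^n] := by
        have h10 : (2:ℕ)^n * 5^n = 10^n := by rw [← mul_pow]; norm_num
        have : 2^k ≡ 2^l [MOD 2^n * 5^n] := by rwa [h10]
        exact (Nat.ModEq.of_mul_left _ this)
      have hz : (2 : ZMod (5^n))^k = (2 : ZMod (5^n))^l := by
        have := (ZMod.natCast_eq_natCast_iff _ _ _).mpr h5
        push_cast at this
        exact this
      have hu2 : IsUnit (2 : ZMod (5^n)) := by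
        have := (ZMod.isUnit_iff_coprime 2 (5^n)).mpr
          (Nat.Coprime.pow_right n (by norm_num))
        simpa using this
      have hcancel : (2 : ZMod (5^n))^(l-k) = 1 := by
        have h1 : (2:ZMod (5^n))^k * (2:ZMod (5^n))^(l-k) = (2:ZMod (5^n))^k * 1 := by
          rw [mul_one, ← pow_add]
          rw [show k + (l-k) = l by omega]
          exact hz.symm
        exact (hu2.pow k).mul_left_cancel h1
      have hdvd : T ∣ l - k := by
        rw [hT, ← ord2 n hn]
        exact orderOf_dvd_of_pow_eq_one hcancel
      rcases Nat.eq_zero_or_pos (l-k) with h0 | h0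
      · omega
      · have := Nat.le_of_dvd h0 hdvd
        omega
    intro k hk l hl hmod
    simp only [Finset.mem_Ico] at hk hl
    rcases Nat.le_total k l with h | h
    · exact key k l hk.1 h hl.2 hmod
    · exact (key l k hl.1 h hk.2 hmod.symm).symm
  -- the target finset of residues
  set S : Finset ℕ := (Finset.Ico n (n+T)).image (fun k => 2^k % N) with hS
  have hcardS : S.card = T := by
    rw [hS, Finset.card_image_of_injOn (fun k hk l hl => hinj k hk l hl), Nat.card_Ico]
    omega
  -- Omega n has the same card as S via Dn
  have hbij : (Omega n).card = S.card := by
    apply Finset.card_bij (fun x _ => Dn n x)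
    · intro x hx
      rw [Omega, Finset.mem_filter] at hx
      obtain ⟨-, k, hk, hxk⟩ := hx
      rw [Nat.mod_eq_of_lt (Dn_lt n x)] at hxk
      rw [hS, Finset.mem_image]
      refine ⟨n + (k - n) % T, ?_, ?_⟩
      · rw [Finset.mem_Ico]
        exact ⟨Nat.le_add_right _ _, by have := Nat.mod_lt (k-n) hTpos; omega⟩
      · have h1 := hred n hn (k - n)
        rw [show n + (k-n) = k by omega] at h1
        rw [Nat.ModEq] at h1
        rw [hxk, ← h1]
    · intro x hx y hy hxy
      have : finFunctionFinEquiv x = finFunctionFinEquiv y := by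
        apply Fin.ext
        rw [← Dn_eq, ← Dn_eq, hxy]
      exact finFunctionFinEquiv.injective this
    · intro r hr
      rw [hS, Finset.mem_image] at hr
      obtain ⟨k, hk, hrk⟩ := hr
      rw [Finset.mem_Ico] at hk
      have hrlt : r < N := by rw [← hrk]; exact Nat.mod_lt _ hNpos
      refine ⟨finFunctionFinEquiv.symm ⟨r, hrlt⟩, ?_, ?_⟩
      · rw [Omega, Finset.mem_filter]
        refine ⟨Finset.mem_univ _, k, hk.1, ?_⟩
        rw [Dn_eq, Equiv.apply_symm_apply]
        show (r : ℕ) % 10^n = 2^k % 10^n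
        rw [Nat.mod_eq_of_lt hrlt]
        exact hrk.symm
      · rw [Dn_eq, Equiv.apply_symm_apply]
  rw [hbij, hcardS]
end

section
/- Let m ≥ 1 and fix an integer t with 0 ≤ t < 2^m. Then the set of pairs (i, j) with 0 ≤ i < 2^{m-1}, 0 ≤ j ≤ 9, and t ≡ 10 i + j (mod 2^m) consists of exactly five pairs, and the digits j occurring are exactly the five digits of the same parity as t (each with a unique corresponding i). -/
/-! Write `2 ^ m = 2 * N` and `10 = 2 * 5`. A congruence `10 i + j ≡ t (mod 2N)` forces
`j ≡ t (mod 2)`, and for such `j`, writing `t - j = 2c`, it is equivalent to `5 i ≡ c (mod N)`,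
which has exactly one solution `i < N` because `5` is invertible modulo a power of `2`. So the
pairs are in bijection, via `Prod.snd`, with the five digits of the parity of `t`. -/

open Finset

lemma Int.exists_lt_mul_modEq_of_coprime {a n : ℕ} (ha : a.Coprime n) [NeZero n] (c : ℤ) :
    ∃ i < n, a * (i : ℤ) ≡ c [ZMOD n] := by
  refine ⟨((ZMod.unitOfCoprime a ha)⁻¹ * (c : ZMod n) : ZMod n).val, ZMod.val_lt _, ?_⟩
  rw [← ZMod.intCast_eq_intCast_iff]
  push_cast
  rw [ZMod.natCast_val, ZMod.cast_id', id, ← ZMod.coe_unitOfCoprime a ha,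
    Units.mul_inv_cancel_left]

section

variable {k a n : ℕ}

lemma eq_of_mul_mul_add_modEq (hk : k ≠ 0) (ha : a.Coprime n) {i i' j : ℕ} (hi : i < n)
    (hi' : i' < n) (h : k * a * i + j ≡ k * a * i' + j [MOD k * n]) : i = i' := by
  have : a * i ≡ a * i' [MOD n] := by
    refine Nat.ModEq.mul_left_cancel' hk ?_
    simpa only [mul_assoc] using h.add_right_cancel' j
  simpa only [Nat.ModEq, Nat.mod_eq_of_lt hi, Nat.mod_eq_of_lt hi'] using
    Nat.ModEq.cancel_left_of_coprime (by rw [Nat.gcd_comm]; exact ha) this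

lemma exists_modEq_mul_mul_add_iff (ha : a.Coprime n) [NeZero n] (t j : ℕ) :
    (∃ i < n, t ≡ k * a * i + j [MOD k * n]) ↔ j ≡ t [MOD k] := by
  constructor
  · rintro ⟨i, -, hi⟩
    have hj : k * a * i + j ≡ j [MOD k] := by simp [Nat.ModEq, mul_assoc]
    exact ((hi.of_mul_right n).trans hj).symm
  · intro h
    obtain ⟨c, hc⟩ : (k : ℤ) ∣ t - j := Nat.modEq_iff_dvd.mp h
    obtain ⟨i, hi, hai⟩ := Int.exists_lt_mul_modEq_of_coprime ha c
    refine ⟨i, hi, ?_⟩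
    rw [← Int.natCast_modEq_iff]
    have hkai := (hai.mul_left' (c := (k : ℤ))).add_right (j : ℤ)
    push_cast
    rw [← hc, sub_add_cancel, ← mul_assoc] at hkai
    exact hkai.symm

variable (t b : ℕ)

lemma image_snd_filter_modEq_mul_mul_add (ha : a.Coprime n) [NeZero n] :
    ((range n ×ˢ range b).filter (fun p => t ≡ k * a * p.1 + p.2 [MOD k * n])).image Prod.snd
      = (range b).filter (fun j => j ≡ t [MOD k]) := by
  ext j
  simp only [mem_image, mem_filter, mem_product, mem_range, Prod.exists, exists_eq_right,
    ← exists_modEq_mul_mul_add_iff ha t j]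
  grind

lemma card_filter_modEq_mul_mul_add (hk : k ≠ 0) (ha : a.Coprime n) [NeZero n] :
    ((range n ×ˢ range b).filter (fun p => t ≡ k * a * p.1 + p.2 [MOD k * n])).card
      = ((range b).filter (fun j => j ≡ t [MOD k])).card := by
  rw [← image_snd_filter_modEq_mul_mul_add t b ha, card_image_of_injOn]
  rintro ⟨i, j⟩ hij ⟨i', j'⟩ hij' (rfl : j = j')
  simp only [mem_coe, mem_filter, mem_product, mem_range] at hij hij'
  rw [eq_of_mul_mul_add_modEq hk ha hij.1.1 hij'.1.1 (hij.2.symm.trans hij'.2)]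

end

lemma card_filter_range_ten_modEq_two (t : ℕ) :
    ((range 10).filter (fun j => j ≡ t [MOD 2])).card = 5 := by
  rcases Nat.mod_two_eq_zero_or_one t with h | h <;> simp only [Nat.ModEq, h] <;> decide

theorem five_pairs_general (m : ℕ) (hm : 1 ≤ m) (t : ℕ) :
    ((Finset.range (2 ^ (m - 1)) ×ˢ Finset.range 10).filter
        (fun p => t % 2 ^ m = (10 * p.1 + p.2) % 2 ^ m)).card = 5 ∧
    ((Finset.range (2 ^ (m - 1)) ×ˢ Finset.range 10).filter
        (fun p => t % 2 ^ m = (10 * p.1 + p.2) % 2 ^ m)).image Prod.snd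
      = (Finset.range 10).filter (fun j => j % 2 = t % 2) := by
  obtain ⟨n, rfl⟩ : ∃ n, m = n + 1 := ⟨m - 1, by omega⟩
  rw [Nat.add_sub_cancel, pow_succ']
  have h5 : Nat.Coprime 5 (2 ^ n) := Nat.Coprime.pow_right _ (by norm_num)
  -- `10 * i` and `2 * 5 * i` agree definitionally, so the general lemmas apply as stated.
  exact ⟨(card_filter_modEq_mul_mul_add (k := 2) t 10 two_ne_zero h5).trans
    (card_filter_range_ten_modEq_two t), image_snd_filter_modEq_mul_mul_add t 10 h5⟩

theorem five_pairs (m : ℕ) (hm : 1 ≤ m) (t : ℕ) (ht : t < 2 ^ m) :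
    ((Finset.range (2 ^ (m - 1)) ×ˢ Finset.range 10).filter
        (fun p => t % 2 ^ m = (10 * p.1 + p.2) % 2 ^ m)).card = 5 ∧
    ((Finset.range (2 ^ (m - 1)) ×ˢ Finset.range 10).filter
        (fun p => t % 2 ^ m = (10 * p.1 + p.2) % 2 ^ m)).image Prod.snd
      = (Finset.range 10).filter (fun j => j % 2 = t % 2) :=
  five_pairs_general m hm t
end

section
/- Let n ≥ 3 and let h_1,…,h_n : {0,…,9} → ℂ. Then ∑_{ω ∈ Ω_n} ∏_{j=1}^n h_j(ω_j) = ∑_{i=1}^{4} h_1(δ_i) · ∑ { ∏_{j=2}^n h_j(x_j) : x ∈ {0,…,9}^{n-1}, D_{n-1}(x) ≡ r_i (mod 2^{n-1}) }, where r_i = ⌊i·2^{n-1}/5⌋ and δ_i = 2·((i·2^{n-1}) mod 5). -/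
open scoped Classical

open Finset

/-!
Writing `D` for the value of a digit string, `x ∈ Ω_n` exactly when `2 ^ n ∣ D` and `5 ∤ D`.
The converse direction holds because `2` is a primitive root modulo `5 ^ n` (its order is
`4 * 5 ^ (n - 1)`, as `2 ^ 4 = 1 + 5 * 3`), so the Chinese remainder theorem produces a suitable
power `2 ^ k` with `k ≥ n`. Splitting off the first digit, `D = d + 10 * D'`, forces
`d ∈ {2, 4, 6, 8}`, and `i ↦ δ_i` is a bijection from `{1, …, 4}` onto these digits. Since
`δ_i + 10 * r_i = i * 2 ^ n`, the remaining condition `2 ^ n ∣ δ_i + 10 * D'` reads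
`D' ≡ r_i [MOD 2 ^ (n - 1)]`.
-/

theorem coprime_five_pow_of_not_dvd {b : ℕ} (hb : ¬ 5 ∣ b) (n : ℕ) : b.Coprime (5 ^ n) :=
  Nat.Coprime.pow_right _ ((Nat.Prime.coprime_iff_not_dvd Nat.prime_five).mpr hb).symm

theorem orderOf_two_zmod_five_pow (n : ℕ) : orderOf (2 : ZMod (5 ^ (n + 1))) = 4 * 5 ^ n := by
  have h16 : orderOf ((2 : ZMod (5 ^ (n + 1))) ^ 4) = 5 ^ n := by
    have := ZMod.orderOf_one_add_mul_prime Nat.prime_five (by norm_num) 3 (by decide) n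
    norm_num at this ⊢
    exact this
  have h4 : 4 ∣ orderOf (2 : ZMod (5 ^ (n + 1))) := by
    have : Fact (Nat.Prime 2) := ⟨Nat.prime_two⟩
    have hmod5 : orderOf (2 : ZMod 5) = 2 ^ 2 := orderOf_eq_prime_pow (by decide) (by decide)
    have := orderOf_map_dvd (ZMod.castHom (dvd_pow_self 5 n.succ_ne_zero) (ZMod 5)).toMonoidHom 2
    rwa [RingHom.toMonoidHom_eq_coe, MonoidHom.coe_coe, map_ofNat, hmod5] at this
  rw [orderOf_pow_of_dvd (by norm_num) h4] at h16
  rw [← h16, Nat.mul_div_cancel' h4]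

theorem exists_two_pow_modEq_five_pow (n : ℕ) {a : ℕ} (ha : ¬ 5 ∣ a) (m : ℕ) :
    ∃ k ≥ m, 2 ^ k ≡ a [MOD 5 ^ n] := by
  obtain ⟨k, hk⟩ : ∃ k, 2 ^ k ≡ a [MOD 5 ^ n] := by
    rcases n with _ | n
    · exact ⟨0, Nat.modEq_one⟩
    set u := ZMod.unitOfCoprime 2 (coprime_five_pow_of_not_dvd (by norm_num) (n + 1))
    have hgen : Subgroup.zpowers u = ⊤ := by
      apply Subgroup.eq_top_of_card_eq
      rw [Nat.card_zpowers, ← orderOf_units, ZMod.coe_unitOfCoprime, Nat.cast_ofNat,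
        orderOf_two_zmod_five_pow, Nat.card_eq_fintype_card, ZMod.card_units_eq_totient,
        Nat.totient_prime_pow_succ Nat.prime_five, mul_comm]
    obtain ⟨k, hk⟩ :
        ZMod.unitOfCoprime a (coprime_five_pow_of_not_dvd ha _) ∈ Submonoid.powers u := by
      rw [mem_powers_iff_mem_zpowers, hgen]; trivial
    refine ⟨k, (ZMod.natCast_eq_natCast_iff _ _ _).mp ?_⟩
    simpa [u] using congrArg Units.val hk
  refine ⟨k + Nat.totient (5 ^ n) * m, ?_, ?_⟩
  · have := Nat.totient_pos.mpr (pow_pos (by norm_num : 0 < 5) n)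
    nlinarith
  · have heuler := Nat.ModEq.pow_totient (coprime_five_pow_of_not_dvd (by norm_num : ¬ 5 ∣ 2) n)
    calc 2 ^ (k + Nat.totient (5 ^ n) * m) = 2 ^ k * (2 ^ Nat.totient (5 ^ n)) ^ m := by
          rw [pow_add, pow_mul]
      _ ≡ a * 1 ^ m [MOD 5 ^ n] := hk.mul (heuler.pow m)
      _ = a := by rw [one_pow, mul_one]

theorem exists_modEq_two_pow_iff {n : ℕ} (hn : n ≠ 0) (N : ℕ) :
    (∃ k ≥ n, N ≡ 2 ^ k [MOD 10 ^ n]) ↔ 2 ^ n ∣ N ∧ ¬ 5 ∣ N := by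
  have hten : 10 ^ n = 2 ^ n * 5 ^ n := by rw [← mul_pow]; rfl
  constructor
  · rintro ⟨k, hk, hN⟩
    refine ⟨(hN.dvd_iff (hten ▸ dvd_mul_right _ _)).mpr (pow_dvd_pow 2 hk), fun h5 => ?_⟩
    have h52 : 5 ∣ 2 ^ k := (hN.dvd_iff (dvd_pow (by norm_num) hn)).mp h5
    exact absurd (Nat.prime_five.dvd_of_dvd_pow h52) (by norm_num)
  · rintro ⟨h2, h5⟩
    obtain ⟨k, hk, hmod5⟩ := exists_two_pow_modEq_five_pow n h5 n
    refine ⟨k, hk, ?_⟩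
    rw [hten, ← Nat.modEq_and_modEq_iff_modEq_mul (Nat.Coprime.pow n n (by norm_num))]
    have hk2 : 2 ^ k ≡ 0 [MOD 2 ^ n] := Nat.modEq_zero_iff_dvd.mpr (pow_dvd_pow 2 hk)
    exact ⟨(Nat.modEq_zero_iff_dvd.mpr h2).trans hk2.symm, hmod5.symm⟩

theorem mem_Omega_iff {n : ℕ} (hn : n ≠ 0) (x : Fin n → Fin 10) :
    x ∈ Omega n ↔ 2 ^ n ∣ Dn n x ∧ ¬ 5 ∣ Dn n x := by
  rw [Omega, mem_filter, ← exists_modEq_two_pow_iff hn]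
  exact and_iff_right (mem_univ x)

theorem Dn_cons (m : ℕ) (d : Fin 10) (y : Fin m → Fin 10) :
    Dn (m + 1) (Fin.cons d y) = d + 10 * Dn m y := by
  simp only [Dn, Fin.sum_univ_succ, Fin.cons_zero, Fin.cons_succ, Fin.val_zero, Fin.val_succ,
    pow_zero, one_mul, pow_succ, mul_sum]
  congr 1
  exact sum_congr rfl fun j _ => by ring

theorem cons_mem_Omega_iff (m : ℕ) (d : Fin 10) (y : Fin m → Fin 10) :
    Fin.cons d y ∈ Omega (m + 1) ↔
      (2 ∣ (d : ℕ) ∧ ¬ 5 ∣ (d : ℕ)) ∧ 2 ^ (m + 1) ∣ d + 10 * Dn m y := by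
  rw [mem_Omega_iff m.add_one_ne_zero, Dn_cons]
  have h2 : 2 ^ (m + 1) ∣ d + 10 * Dn m y → 2 ∣ (d : ℕ) := fun h =>
    (Nat.dvd_add_left (dvd_mul_of_dvd_left (by norm_num) _)).mp
      ((dvd_pow_self 2 m.add_one_ne_zero).trans h)
  rw [Nat.dvd_add_left (a := 5) (dvd_mul_of_dvd_left (by norm_num) _)]
  tauto

theorem sum_Omega_succ {R : Type*} [NonUnitalNonAssocSemiring R] (m : ℕ) (g : ℕ → R)
    (P : (Fin m → Fin 10) → R) :
    ∑ x ∈ Omega (m + 1), g (x 0) * P (Fin.tail x) =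
      ∑ d ∈ (range 10).filter (fun d => 2 ∣ d ∧ ¬ 5 ∣ d),
        g d * ∑ y ∈ univ.filter (fun y => 2 ^ (m + 1) ∣ d + 10 * Dn m y), P y := by
  rw [← univ_inter (Omega _), ← sum_ite_mem, ← (Fin.consEquiv fun _ => Fin 10).sum_comp,
    Fintype.sum_prod_type, sum_filter, ← Fin.sum_univ_eq_sum_range]
  refine sum_congr rfl fun d _ => ?_
  simp only [Fin.consEquiv, Equiv.coe_fn_mk, cons_mem_Omega_iff, Fin.cons_zero, Fin.tail_cons]
  split_ifs with hd
  · rw [mul_sum, sum_filter]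
    exact sum_congr rfl fun y _ => by simp [hd]
  · simp [hd]

theorem two_pow_succ_dvd_iff_modEq (m i D : ℕ) :
    2 ^ (m + 1) ∣ 2 * (i * 2 ^ m % 5) + 10 * D ↔ D ≡ i * 2 ^ m / 5 [MOD 2 ^ m] := by
  set r := i * 2 ^ m / 5
  have hsplit :
      ((2 * (i * 2 ^ m % 5) + 10 * D : ℕ) : ℤ) = 2 ^ (m + 1) * i - 2 * (5 * (r - D)) := by
    have h : i * 2 ^ m % 5 + 5 * r = i * 2 ^ m := Nat.mod_add_div _ _
    zify at h
    push_cast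
    linear_combination 2 * h
  have hcop : IsCoprime ((2 : ℤ) ^ m) 5 :=
    IsCoprime.pow_left (Int.isCoprime_iff_gcd_eq_one.mpr rfl)
  rw [Nat.modEq_iff_dvd, ← Int.natCast_dvd_natCast, hsplit]
  simp only [Nat.cast_pow, Nat.cast_ofNat]
  rw [dvd_sub_right (dvd_mul_right _ _), pow_succ', mul_dvd_mul_iff_left two_ne_zero]
  exact ⟨hcop.dvd_of_dvd_mul_left, fun h => h.mul_left 5⟩

theorem injOn_two_mul_mul_two_pow_mod_five (m : ℕ) :
    Set.InjOn (fun i => 2 * (i * 2 ^ m % 5)) (Icc 1 4 : Finset ℕ) := by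
  intro i hi j hj hij
  simp only [coe_Icc, Set.mem_Icc] at hi hj
  have hmod : i * 2 ^ m ≡ j * 2 ^ m [MOD 5] := Nat.eq_of_mul_eq_mul_left two_pos hij
  have hcop : Nat.gcd 5 (2 ^ m) = 1 := Nat.Coprime.pow_right m (by norm_num)
  have : i % 5 = j % 5 := hmod.cancel_right_of_coprime hcop
  omega

theorem image_two_mul_mul_two_pow_mod_five (m : ℕ) :
    (Icc 1 4).image (fun i => 2 * (i * 2 ^ m % 5)) =
      (range 10).filter (fun d => 2 ∣ d ∧ ¬ 5 ∣ d) := by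
  refine eq_of_subset_of_card_le (fun d hd => ?_) ?_
  · obtain ⟨i, hi, rfl⟩ := mem_image.mp hd
    have h5 : ¬ 5 ∣ i * 2 ^ m := by
      rw [Nat.Prime.dvd_mul Nat.prime_five, not_or]
      exact ⟨fun h => by simp only [mem_Icc] at hi; omega,
        fun h => absurd (Nat.prime_five.dvd_of_dvd_pow h) (by norm_num)⟩
    simp only [mem_filter, mem_range]
    omega
  · rw [card_image_of_injOn (injOn_two_mul_mul_two_pow_mod_five m), Nat.card_Icc]
    rfl

theorem matrix_representation (n : ℕ) (hn : 3 ≤ n) (h : ℕ → ℕ → ℂ) :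
    (∑ ω ∈ Omega n, ∏ j : Fin n, h ((j : ℕ) + 1) (ω j))
      = ∑ i ∈ Finset.Icc 1 4,
          h 1 (2 * (i * 2 ^ (n - 1) % 5)) *
            ∑ x ∈ Finset.univ.filter
                (fun x : Fin (n - 1) → Fin 10 =>
                  Dn (n - 1) x % 2 ^ (n - 1) = i * 2 ^ (n - 1) / 5 % 2 ^ (n - 1)),
              ∏ j : Fin (n - 1), h ((j : ℕ) + 2) (x j) := by
  obtain ⟨m, rfl⟩ : ∃ m, n = m + 1 := ⟨n - 1, by omega⟩
  have hprod (ω : Fin (m + 1) → Fin 10) : ∏ j : Fin (m + 1), h ((j : ℕ) + 1) (ω j) =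
      h 1 (ω 0) * ∏ j : Fin m, h ((j : ℕ) + 2) (Fin.tail ω j) := by
    simp [Fin.prod_univ_succ, Fin.tail]
  simp only [hprod]
  rw [sum_Omega_succ m (h 1) fun y => ∏ j : Fin m, h ((j : ℕ) + 2) (y j),
    ← image_two_mul_mul_two_pow_mod_five m, sum_image (injOn_two_mul_mul_two_pow_mod_five m)]
  refine sum_congr rfl fun i _ => ?_
  simp_rw [two_pow_succ_dvd_iff_modEq]
  -- `m + 1 - 1` reduces to `m`, and `Nat.ModEq` unfolds to the `%` equation of the statement.
  rfl
end
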